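/- Fix α > 2 and ρ ∈ (0,1). The function F(s) = ρ·s + √((1−ρ²)·g_α(s)) is concave on [0,1] and attains its maximum over [0,1] at a unique point s* ∈ (0,1]. -/

import Mathlib

/-- `c_α = 1/tan(π/α)`. -/
noncomputable def cAlpha (α : ℝ) : ℝ := 1 / Real.tan (Real.pi / α)

/-- `r_α(s) = √(c_α² + 1 − s²) − c_α`. -/
noncomputable def rAlpha (α s : ℝ) : ℝ :=
  Real.sqrt (cAlpha α ^ 2 + 1 - s ^ 2) - cAlpha α

/-- `g_α(s) = −1 − s² + (2α/π)·r_α(s) + (2αs/π)·arctan(s/(r_α(s) + c_α))`. -/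
noncomputable def gAlpha (α s : ℝ) : ℝ :=
  -1 - s ^ 2 + 2 * α * rAlpha α s / Real.pi
    + 2 * α * s / Real.pi * Real.arctan (s / (rAlpha α s + cAlpha α))

/-!
With `k = sin (π / α)` and `C = 2α / π`, the identity `arctan (s / √(c_α² + 1 - s²)) = arcsin (k s)`
turns `g_α` into `-1 - s² + C (√(1 - k² s²) / k - c_α) + C s arcsin (k s)`, whose third derivative
`C k³ s / (1 - k² s²)^(3/2)` is positive on `(0, 1)`. As `g'(0) = g'(1) = 0`, the convex function
`g'` is negative on `(0, 1)`, so `g` decreases to `g(1) = 0` and is positive on `[0, 1)`.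
The expression `g'² - 2 g g''` has derivative `-2 g g''' < 0` and vanishes at `1`, hence is
positive on `[0, 1)`; this is exactly the sign condition for `(√g)'' < 0`.
The maximiser is unique by strict concavity, and it is not `0` since `F'(0) = ρ > 0`.
-/

open Real Set

section Generic

variable {a b : ℝ}

lemma neg_of_deriv2_pos_of_eq_zero {g g' g'' : ℝ → ℝ} (hab : a < b)
    (hg : ∀ x ∈ Icc a b, HasDerivAt g (g' x) x) (hg' : ∀ x ∈ Ioo a b, HasDerivAt g' (g'' x) x)
    (hg'' : ∀ x ∈ Ioo a b, 0 < g'' x) (ha : g a = 0) (hb : g b = 0) :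
    ∀ x ∈ Ioo a b, g x < 0 := by
  have hmono : StrictMonoOn g' (Ioo a b) :=
    strictMonoOn_of_deriv_pos (convex_Ioo a b)
      (fun x hx => (hg' x hx).continuousAt.continuousWithinAt) fun x hx => by
        rw [interior_Ioo] at hx
        rw [(hg' x hx).deriv]
        exact hg'' x hx
  have hconv : StrictConvexOn ℝ (Icc a b) g := by
    refine StrictMonoOn.strictConvexOn_of_deriv (convex_Icc a b)
      (fun x hx => (hg x hx).continuousAt.continuousWithinAt) ?_
    rw [interior_Icc]
    exact hmono.congr fun x hx => (hg x (Ioo_subset_Icc_self hx)).deriv.symm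
  intro x hx
  simpa [ha, hb] using hconv.lt_on_openSegment (left_mem_Icc.2 hab.le) (right_mem_Icc.2 hab.le)
    hab.ne (by rwa [openSegment_eq_Ioo hab])

lemma pos_of_deriv_neg_of_eq_zero {g g' : ℝ → ℝ} (hg : ∀ x ∈ Icc a b, HasDerivAt g (g' x) x)
    (hg' : ∀ x ∈ Ioo a b, g' x < 0) (hb : g b = 0) : ∀ x ∈ Ico a b, 0 < g x := by
  have hanti : StrictAntiOn g (Icc a b) :=
    strictAntiOn_of_deriv_neg (convex_Icc a b)
      (fun x hx => (hg x hx).continuousAt.continuousWithinAt) fun x hx => by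
        rw [interior_Icc] at hx
        rw [(hg x (Ioo_subset_Icc_self hx)).deriv]
        exact hg' x hx
  intro x hx
  simpa [hb] using hanti (Ico_subset_Icc_self hx) (right_mem_Icc.2 (hx.1.trans hx.2.le)) hx.2

lemma strictConcaveOn_sqrt_of_two_mul_mul_deriv2_lt_sq {f f' f'' : ℝ → ℝ}
    (hf : ContinuousOn f (Icc a b)) (hf' : ∀ x ∈ Ioo a b, HasDerivAt f (f' x) x)
    (hf'' : ∀ x ∈ Ioo a b, HasDerivAt f' (f'' x) x) (hpos : ∀ x ∈ Ioo a b, 0 < f x)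
    (hlt : ∀ x ∈ Ioo a b, 2 * f x * f'' x < f' x ^ 2) :
    StrictConcaveOn ℝ (Icc a b) fun x => √(f x) := by
  have hd2 : ∀ x ∈ Ioo a b, HasDerivAt (fun x => f' x / (2 * √(f x)))
      ((2 * f x * f'' x - f' x ^ 2) / (4 * f x * √(f x))) x := by
    intro x hx
    have hy : 0 < √(f x) := sqrt_pos.2 (hpos x hx)
    have hy2 : √(f x) ^ 2 = f x := sq_sqrt (hpos x hx).le
    have hf0 : f x ≠ 0 := (hpos x hx).ne'
    refine ((hf'' x hx).div (((hf' x hx).sqrt (hpos x hx).ne').const_mul 2) (by positivity)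
      ).congr_deriv ?_
    field_simp
    rw [hy2]
    ring
  refine StrictAntiOn.strictConcaveOn_of_deriv (convex_Icc a b) hf.sqrt ?_
  rw [interior_Icc]
  refine StrictAntiOn.congr ?_ fun x hx => ((hf' x hx).sqrt (hpos x hx).ne').deriv.symm
  refine strictAntiOn_of_deriv_neg (convex_Ioo a b)
    (fun x hx => (hd2 x hx).continuousAt.continuousWithinAt) fun x hx => ?_
  rw [interior_Ioo] at hx
  rw [(hd2 x hx).deriv]
  have := hpos x hx
  exact div_neg_of_neg_of_pos (by linarith [hlt x hx]) (by positivity)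

lemma pos_of_deriv3_pos {f f' f'' f''' : ℝ → ℝ} (hab : a < b)
    (hf : ∀ x ∈ Icc a b, HasDerivAt f (f' x) x) (hf' : ∀ x ∈ Icc a b, HasDerivAt f' (f'' x) x)
    (hf'' : ∀ x ∈ Ioo a b, HasDerivAt f'' (f''' x) x) (hf''' : ∀ x ∈ Ioo a b, 0 < f''' x)
    (hf'a : f' a = 0) (hf'b : f' b = 0) (hfb : f b = 0) : ∀ x ∈ Ico a b, 0 < f x :=
  pos_of_deriv_neg_of_eq_zero hf (neg_of_deriv2_pos_of_eq_zero hab hf' hf'' hf''' hf'a hf'b) hfb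

lemma two_mul_mul_deriv2_lt_sq_of_deriv3_pos {f f' f'' f''' : ℝ → ℝ} (hab : a < b)
    (hf : ∀ x ∈ Icc a b, HasDerivAt f (f' x) x) (hf' : ∀ x ∈ Icc a b, HasDerivAt f' (f'' x) x)
    (hf'' : ∀ x ∈ Icc a b, HasDerivAt f'' (f''' x) x) (hf''' : ∀ x ∈ Ioo a b, 0 < f''' x)
    (hf'a : f' a = 0) (hf'b : f' b = 0) (hfb : f b = 0) :
    ∀ x ∈ Ico a b, 2 * f x * f'' x < f' x ^ 2 := by
  have hpos := pos_of_deriv3_pos hab hf hf' (fun x hx => hf'' x (Ioo_subset_Icc_self hx)) hf'''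
    hf'a hf'b hfb
  have hderiv : ∀ x ∈ Icc a b, HasDerivAt (fun x => f' x ^ 2 - 2 * f x * f'' x)
      (-(2 * f x * f''' x)) x := fun x hx =>
    (((hf' x hx).pow 2).sub (((hf x hx).const_mul 2).mul (hf'' x hx))).congr_deriv (by ring)
  intro x hx
  have hneg : ∀ x ∈ Ioo a b, -(2 * f x * f''' x) < 0 := fun x hx =>
    neg_neg_of_pos (mul_pos (mul_pos two_pos (hpos x (Ioo_subset_Ico_self hx))) (hf''' x hx))
  simpa using pos_of_deriv_neg_of_eq_zero hderiv hneg (by simp [hfb, hf'b]) x hx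

lemma strictConcaveOn_sqrt_of_deriv3_pos {f f' f'' f''' : ℝ → ℝ} (hab : a < b)
    (hf : ∀ x ∈ Icc a b, HasDerivAt f (f' x) x) (hf' : ∀ x ∈ Icc a b, HasDerivAt f' (f'' x) x)
    (hf'' : ∀ x ∈ Icc a b, HasDerivAt f'' (f''' x) x) (hf''' : ∀ x ∈ Ioo a b, 0 < f''' x)
    (hf'a : f' a = 0) (hf'b : f' b = 0) (hfb : f b = 0) :
    StrictConcaveOn ℝ (Icc a b) fun x => √(f x) :=
  strictConcaveOn_sqrt_of_two_mul_mul_deriv2_lt_sq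
    (fun x hx => (hf x hx).continuousAt.continuousWithinAt)
    (fun x hx => hf x (Ioo_subset_Icc_self hx)) (fun x hx => hf' x (Ioo_subset_Icc_self hx))
    (fun x hx => pos_of_deriv3_pos hab hf hf' (fun x hx => hf'' x (Ioo_subset_Icc_self hx)) hf'''
      hf'a hf'b hfb x (Ioo_subset_Ico_self hx))
    (fun x hx => two_mul_mul_deriv2_lt_sq_of_deriv3_pos hab hf hf' hf'' hf''' hf'a hf'b hfb x
      (Ioo_subset_Ico_self hx))

lemma exists_mem_Ioc_isMaxOn_of_hasDerivWithinAt_pos {f : ℝ → ℝ} {d : ℝ} (hab : a < b)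
    (hf : ContinuousOn f (Icc a b)) (hd : HasDerivWithinAt f d (Icc a b) a) (hd0 : 0 < d) :
    ∃ x ∈ Ioc a b, IsMaxOn f (Icc a b) x := by
  obtain ⟨x, hx, hmax⟩ := isCompact_Icc.exists_isMaxOn (nonempty_Icc.2 hab.le) hf
  refine ⟨x, ⟨lt_of_le_of_ne hx.1 ?_, hx.2⟩, hmax⟩
  rintro rfl
  have hseg : segment ℝ a (a + (b - a)) ⊆ Icc a b := by
    rw [add_sub_cancel, segment_eq_Icc hab.le]
  have hnonpos : (b - a) * d ≤ 0 := by
    simpa using hmax.localize.hasFDerivWithinAt_nonpos hd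
      (mem_posTangentConeAt_of_segment_subset hseg)
  exact (mul_pos (sub_pos.2 hab) hd0).not_ge hnonpos

end Generic

noncomputable def gArcsin (k C c s : ℝ) : ℝ :=
  -1 - s ^ 2 + C * (√(1 - (k * s) ^ 2) / k - c) + C * s * arcsin (k * s)

section gArcsin

variable {k C c s : ℝ}

lemma hasDerivAt_sqrt_one_sub_sq_mul (hs : (k * s) ^ 2 < 1) :
    HasDerivAt (fun t => √(1 - (k * t) ^ 2)) (-(k ^ 2 * s) / √(1 - (k * s) ^ 2)) s := by
  have hd : HasDerivAt (fun t => 1 - (k * t) ^ 2) (-(2 * k ^ 2 * s)) s :=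
    ((((hasDerivAt_id' s).const_mul k).pow 2).const_sub 1).congr_deriv (by ring)
  refine (hd.sqrt (by linarith)).congr_deriv ?_
  field_simp

lemma hasDerivAt_arcsin_mul (hs : (k * s) ^ 2 < 1) :
    HasDerivAt (fun t => arcsin (k * t)) (k / √(1 - (k * s) ^ 2)) s := by
  have h : k * s ∈ Ioo (-1) 1 := by
    constructor <;> nlinarith
  refine ((hasDerivAt_arcsin h.1.ne' h.2.ne).comp s ((hasDerivAt_id s).const_mul k)).congr_deriv ?_
  field_simp

lemma hasDerivAt_gArcsin (hs : (k * s) ^ 2 < 1) :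
    HasDerivAt (gArcsin k C c) (-2 * s + C * arcsin (k * s)) s := by
  refine ((((hasDerivAt_id' s).pow 2).const_sub (-1)).add
    ((((hasDerivAt_sqrt_one_sub_sq_mul hs).div_const k).sub_const c).const_mul C) |>.add
    (((hasDerivAt_id' s).const_mul C).mul (hasDerivAt_arcsin_mul hs))).congr_deriv ?_
  field_simp
  ring

lemma hasDerivAt_gArcsin_deriv (hs : (k * s) ^ 2 < 1) :
    HasDerivAt (fun t => -2 * t + C * arcsin (k * t)) (-2 + C * k / √(1 - (k * s) ^ 2)) s :=
  (((hasDerivAt_id s).const_mul (-2)).add ((hasDerivAt_arcsin_mul hs).const_mul C)).congr_deriv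
    (by ring)

lemma hasDerivAt_gArcsin_deriv2 (hs : (k * s) ^ 2 < 1) :
    HasDerivAt (fun t => -2 + C * k / √(1 - (k * t) ^ 2))
      (C * k ^ 3 * s / √(1 - (k * s) ^ 2) ^ 3) s := by
  have hsq : 0 < √(1 - (k * s) ^ 2) := sqrt_pos.2 (by linarith)
  refine (((hasDerivAt_const s (C * k)).div (hasDerivAt_sqrt_one_sub_sq_mul hs) hsq.ne').const_add
    (-2)).congr_deriv ?_
  field_simp
  ring

end gArcsin

section gAlpha

variable {α s : ℝ}

lemma sin_pi_div_mem_Ioo (hα : 2 < α) : sin (π / α) ∈ Ioo 0 1 := by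
  have hα0 : 0 < α := by linarith
  have hm : π / α < π / 2 := div_lt_div_of_pos_left pi_pos two_pos hα
  refine ⟨sin_pos_of_pos_of_lt_pi (by positivity) (by linarith [pi_pos]), ?_⟩
  rw [← sin_pi_div_two]
  exact sin_lt_sin_of_lt_of_le_pi_div_two (by linarith [pi_pos, div_pos pi_pos hα0]) le_rfl hm

lemma gAlpha_eq_gArcsin (hα : 1 < α) (hs : (sin (π / α) * s) ^ 2 < 1) :
    gAlpha α s = gArcsin (sin (π / α)) (2 * α / π) (cAlpha α) s := by
  set k := sin (π / α)
  have hk : 0 < k := sin_pos_of_pos_of_lt_pi (by positivity) (div_lt_self pi_pos hα)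
  have hc : cAlpha α = cos (π / α) / k := by rw [cAlpha, tan_eq_sin_div_cos, one_div_div]
  have hck : cAlpha α ^ 2 + 1 - s ^ 2 = (1 - (k * s) ^ 2) / k ^ 2 := by
    rw [hc]
    field_simp
    linear_combination sin_sq_add_cos_sq (π / α)
  have hr : rAlpha α s + cAlpha α = √(1 - (k * s) ^ 2) / k := by
    rw [rAlpha, sub_add_cancel, hck, sqrt_div' _ (sq_nonneg k), sqrt_sq hk.le]
  have harc : arctan (s / (rAlpha α s + cAlpha α)) = arcsin (k * s) := by
    have hks : k * s ∈ Ioo (-1) 1 := by constructor <;> nlinarith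
    have hsq : 0 < √(1 - (k * s) ^ 2) := sqrt_pos.2 (by linarith)
    rw [hr, arcsin_eq_arctan hks]
    congr 1
    field_simp
  rw [gAlpha, gArcsin, harc, ← hr]
  ring

lemma hasDerivAt_gAlpha (hα : 1 < α) (hs : (sin (π / α) * s) ^ 2 < 1) :
    HasDerivAt (gAlpha α) (-2 * s + 2 * α / π * arcsin (sin (π / α) * s)) s := by
  refine (hasDerivAt_gArcsin (c := cAlpha α) hs).congr_of_eventuallyEq ?_
  have hcont : Continuous fun t => (sin (π / α) * t) ^ 2 := by fun_prop
  filter_upwards [hcont.continuousAt.eventually_lt continuousAt_const hs] with t ht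
  exact gAlpha_eq_gArcsin hα ht

lemma sq_sin_pi_div_mul_lt_one (hα : 2 < α) (hs : s ∈ Icc 0 1) : (sin (π / α) * s) ^ 2 < 1 := by
  obtain ⟨hk0, hk1⟩ := sin_pi_div_mem_Ioo hα
  rw [mul_pow]
  nlinarith [pow_le_one₀ hs.1 hs.2 (n := 2)]

lemma mul_arcsin_sin_pi_div (hα : 2 < α) : 2 * α / π * arcsin (sin (π / α)) = 2 := by
  have hα0 : 0 < α := by linarith
  have hm : π / α < π / 2 := div_lt_div_of_pos_left pi_pos two_pos hα
  rw [arcsin_sin (by linarith [div_pos pi_pos hα0]) hm.le]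
  field_simp

lemma gAlpha_one (hα : 2 < α) : gAlpha α 1 = 0 := by
  have hα0 : 0 < α := by linarith
  have hm : π / α < π / 2 := div_lt_div_of_pos_left pi_pos two_pos hα
  have htan : 0 < tan (π / α) := tan_pos_of_pos_of_lt_pi_div_two (by positivity) hm
  have hr : rAlpha α 1 = 0 := by
    rw [rAlpha, one_pow, add_sub_cancel_right, sqrt_sq (by rw [cAlpha]; positivity), sub_self]
  rw [gAlpha, hr, zero_add, cAlpha, one_div_one_div,
    arctan_tan (by linarith [div_pos pi_pos hα0]) hm]
  field_simp
  ring

lemma deriv3_gAlpha_pos (hα : 2 < α) (hs : s ∈ Ioo 0 1) :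
    0 < 2 * α / π * sin (π / α) ^ 3 * s / √(1 - (sin (π / α) * s) ^ 2) ^ 3 := by
  have hsq := sq_sin_pi_div_mul_lt_one hα (Ioo_subset_Icc_self hs)
  have := (sin_pi_div_mem_Ioo hα).1
  have := hs.1
  have : 0 < α := by linarith
  have : 0 < √(1 - (sin (π / α) * s) ^ 2) := sqrt_pos.2 (by linarith)
  positivity

lemma continuousOn_gAlpha (hα : 2 < α) : ContinuousOn (gAlpha α) (Icc 0 1) := fun s hs =>
  (hasDerivAt_gAlpha (by linarith) (sq_sin_pi_div_mul_lt_one hα hs)).continuousAt.continuousWithinAt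

lemma gAlpha_pos (hα : 2 < α) : ∀ s ∈ Ico 0 1, 0 < gAlpha α s := by
  have hks (s) (hs : s ∈ Icc (0 : ℝ) 1) := sq_sin_pi_div_mul_lt_one hα hs
  exact pos_of_deriv3_pos one_pos (fun s hs => hasDerivAt_gAlpha (by linarith) (hks s hs))
    (fun s hs => hasDerivAt_gArcsin_deriv (hks s hs))
    (fun s hs => hasDerivAt_gArcsin_deriv2 (hks s (Ioo_subset_Icc_self hs)))
    (fun s hs => deriv3_gAlpha_pos hα hs) (by simp)
    (by rw [mul_one, mul_one, mul_arcsin_sin_pi_div hα]; norm_num) (gAlpha_one hα)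

lemma strictConcaveOn_sqrt_mul_gAlpha (hα : 2 < α) {μ : ℝ} (hμ : 0 < μ) :
    StrictConcaveOn ℝ (Icc 0 1) fun s => √(μ * gAlpha α s) := by
  have hks (s) (hs : s ∈ Icc (0 : ℝ) 1) := sq_sin_pi_div_mul_lt_one hα hs
  exact strictConcaveOn_sqrt_of_deriv3_pos one_pos
    (fun s hs => (hasDerivAt_gAlpha (by linarith) (hks s hs)).const_mul μ)
    (fun s hs => (hasDerivAt_gArcsin_deriv (hks s hs)).const_mul μ)
    (fun s hs => (hasDerivAt_gArcsin_deriv2 (hks s hs)).const_mul μ)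
    (fun s hs => mul_pos hμ (deriv3_gAlpha_pos hα hs)) (by simp)
    (by rw [mul_one, mul_one, mul_arcsin_sin_pi_div hα]; norm_num) (by rw [gAlpha_one hα, mul_zero])

lemma hasDerivAt_sqrt_mul_gAlpha_zero (hα : 2 < α) {μ : ℝ} (hμ : 0 < μ) :
    HasDerivAt (fun s => √(μ * gAlpha α s)) 0 0 := by
  have hpos : μ * gAlpha α 0 ≠ 0 := (mul_pos hμ (gAlpha_pos hα 0 ⟨le_rfl, one_pos⟩)).ne'
  simpa using ((hasDerivAt_gAlpha (by linarith) (by simp)).const_mul μ).sqrt hpos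

end gAlpha

/-- Fix `α > 2` and `ρ ∈ (0,1)`. The function
`F(s) = ρ·s + √((1−ρ²)·g_α(s))` is concave on `[0,1]` and attains its maximum
over `[0,1]` at a unique point `s* ∈ (0,1]`. -/
theorem phaseMax_scalar_objective_concave_unique_max (α ρ : ℝ) (hα : 2 < α)
    (hρ : ρ ∈ Set.Ioo (0 : ℝ) 1) :
    ConcaveOn ℝ (Set.Icc 0 1)
        (fun s : ℝ => ρ * s + Real.sqrt ((1 - ρ ^ 2) * gAlpha α s)) ∧
    ∃ sstar ∈ Set.Ioc (0 : ℝ) 1,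
      IsMaxOn (fun s : ℝ => ρ * s + Real.sqrt ((1 - ρ ^ 2) * gAlpha α s))
        (Set.Icc 0 1) sstar ∧
      ∀ s ∈ Set.Icc (0 : ℝ) 1,
        IsMaxOn (fun s : ℝ => ρ * s + Real.sqrt ((1 - ρ ^ 2) * gAlpha α s))
          (Set.Icc 0 1) s → s = sstar := by
  obtain ⟨hρ0, hρ1⟩ := hρ
  have hμ : 0 < 1 - ρ ^ 2 := by nlinarith
  have hconc : StrictConcaveOn ℝ (Icc 0 1) fun s => ρ * s + √((1 - ρ ^ 2) * gAlpha α s) :=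
    ((concaveOn_id (convex_Icc 0 1)).smul hρ0.le).add_strictConcaveOn
      (strictConcaveOn_sqrt_mul_gAlpha hα hμ)
  have hcont : ContinuousOn (fun s => ρ * s + √((1 - ρ ^ 2) * gAlpha α s)) (Icc 0 1) := by
    have := continuousOn_gAlpha hα
    fun_prop
  have hderiv : HasDerivAt (fun s => ρ * s + √((1 - ρ ^ 2) * gAlpha α s)) ρ 0 :=
    (((hasDerivAt_id' 0).const_mul ρ).add (hasDerivAt_sqrt_mul_gAlpha_zero hα hμ)).congr_deriv
      (by ring)
  obtain ⟨sstar, hsstar, hmax⟩ :=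
    exists_mem_Ioc_isMaxOn_of_hasDerivWithinAt_pos one_pos hcont hderiv.hasDerivWithinAt hρ0
  exact ⟨hconc.concaveOn, sstar, hsstar, hmax, fun s hs hmax' =>
    hconc.eq_of_isMaxOn hmax' hmax hs (Ioc_subset_Icc_self hsstar)⟩
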